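/- arXiv:1304.4773 — 2 statements merged into one kernel-verified Lean document; each statement's English description precedes it below -/
import Mathlib

section
/- Fix a penalty parameter λ > 0. The LAD-lasso estimator is defined for a sample Z = (X, y) with X ∈ ℝ^{n×p}, y ∈ ℝ^n as a minimizer over β ∈ ℝ^p of Σ_{i=1}^{n} |y_i − x_i'β| + n λ Σ_{j=1}^{p} |β_j|. Then for every sample Z, the replacement finite-sample breakdown point of the LAD-lasso equals 1/n; in particular, replacing a single observation by suitably chosen values can make the Euclidean norm of every LAD-lasso minimizer arbitrarily large. -/
open Finset

/-- The `i`-th order statistic of the vector `r`, i.e. the `i`-th entry after sorting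
the entries of `r` in nondecreasing order. -/
noncomputable def orderStat {n : ℕ} (r : Fin n → ℝ) (i : Fin n) : ℝ :=
  r (Tuple.sort r i)

/-- The sum of the `h` smallest entries (order statistics) of the vector `r`. -/
noncomputable def trimmedSum {n : ℕ} (h : ℕ) (r : Fin n → ℝ) : ℝ :=
  ∑ i ∈ Finset.univ.filter (fun i : Fin n => (i : ℕ) < h), orderStat r i

/-- The L¹ norm of a coefficient vector `β ∈ ℝ^p`. -/
noncomputable def l1norm {p : ℕ} (β : Fin p → ℝ) : ℝ := ∑ j, |β j|

/-- The Euclidean (L²) norm of a coefficient vector `β ∈ ℝ^p`. -/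
noncomputable def euclNorm {p : ℕ} (β : Fin p → ℝ) : ℝ := Real.sqrt (∑ j, β j ^ 2)

/-- `Corrupt m X X' y y'` : the sample `(X', y')` is obtained from the sample `(X, y)` by
replacing (at most) `m` of the `n` observations `(xᵢ', yᵢ)` by arbitrary values. -/
def Corrupt {n p : ℕ} (m : ℕ) (X X' : Fin n → Fin p → ℝ) (y y' : Fin n → ℝ) : Prop :=
  ∃ s : Finset (Fin n), s.card ≤ m ∧ ∀ i ∉ s, (∀ j, X' i j = X i j) ∧ y' i = y i

/-- The LAD-lasso objective function `Σ_{i=1}^{n} |yᵢ − xᵢ'β| + n λ Σ_j |β_j|`. -/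
noncomputable def QLADLasso {n p : ℕ} (lam : ℝ)
    (X : Fin n → Fin p → ℝ) (y : Fin n → ℝ) (β : Fin p → ℝ) : ℝ :=
  ∑ i, |y i - ∑ j, X i j * β j| + (n : ℝ) * lam * l1norm β

/-- `BreaksDown est X y m` : the supremum of `‖est(Z̃)‖₂` over all samples `Z̃` obtained
from `Z = (X, y)` by replacing `m` observations by arbitrary values is infinite. -/
def BreaksDown {n p : ℕ} (est : (Fin n → Fin p → ℝ) → (Fin n → ℝ) → Fin p → ℝ)
    (X : Fin n → Fin p → ℝ) (y : Fin n → ℝ) (m : ℕ) : Prop :=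
  ∀ M : ℝ, ∃ X' y', Corrupt m X X' y y' ∧ M < euclNorm (est X' y')

/-- The replacement finite-sample breakdown point
`ε*(est; Z) = min{ m/n : sup_{Z̃} ‖est(Z̃)‖₂ = ∞ }`. -/
noncomputable def breakdownPoint {n p : ℕ}
    (est : (Fin n → Fin p → ℝ) → (Fin n → ℝ) → Fin p → ℝ)
    (X : Fin n → Fin p → ℝ) (y : Fin n → ℝ) : ℝ :=
  ((sInf {m : ℕ | BreaksDown est X y m} : ℕ) : ℝ) / n

/-!
Put a single outlier `(c • eⱼ, c t)` in place of observation `i`. At `β = t • eⱼ` its residual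
vanishes, so the minimal objective is at most some `K` depending on `t` but not on `c`, while
the outlier alone contributes `c |t - βⱼ|` to the objective at any `β`. Taking `c` of order
`K / t` forces every minimizer to have `βⱼ > t / 2`. Since an uncorrupted sample cannot break
down, the breakdown point is exactly `1 / n`.
-/

section Breakdown

variable {n p : ℕ}

theorem corrupt_zero_iff {X X' : Fin n → Fin p → ℝ} {y y' : Fin n → ℝ} :
    Corrupt 0 X X' y y' ↔ X' = X ∧ y' = y := by
  constructor
  · rintro ⟨s, hs, hfix⟩
    obtain rfl : s = ∅ := Finset.card_eq_zero.mp (Nat.le_zero.mp hs)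
    exact ⟨funext fun i => funext (hfix i (Finset.notMem_empty i)).1,
      funext fun i => (hfix i (Finset.notMem_empty i)).2⟩
  · rintro ⟨rfl, rfl⟩
    exact ⟨∅, le_rfl, fun _ _ => ⟨fun _ => rfl, rfl⟩⟩

theorem corrupt_one_update (X : Fin n → Fin p → ℝ) (y : Fin n → ℝ) (i : Fin n)
    (x : Fin p → ℝ) (v : ℝ) :
    Corrupt 1 X (Function.update X i x) y (Function.update y i v) :=
  ⟨{i}, by simp, fun k hk => by
    rw [Finset.mem_singleton] at hk
    simp [Function.update_of_ne hk]⟩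

theorem not_breaksDown_zero (est : (Fin n → Fin p → ℝ) → (Fin n → ℝ) → Fin p → ℝ)
    (X : Fin n → Fin p → ℝ) (y : Fin n → ℝ) : ¬ BreaksDown est X y 0 := by
  intro h
  obtain ⟨X', y', hcorrupt, hlt⟩ := h (euclNorm (est X y))
  obtain ⟨rfl, rfl⟩ := corrupt_zero_iff.mp hcorrupt
  exact lt_irrefl _ hlt

theorem breakdownPoint_eq_of_breaksDown_one
    {est : (Fin n → Fin p → ℝ) → (Fin n → ℝ) → Fin p → ℝ}
    {X : Fin n → Fin p → ℝ} {y : Fin n → ℝ} (h : BreaksDown est X y 1) :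
    breakdownPoint est X y = 1 / n := by
  have hmem : BreaksDown est X y (sInf {m : ℕ | BreaksDown est X y m}) :=
    Nat.sInf_mem (s := {m : ℕ | BreaksDown est X y m}) ⟨1, h⟩
  have hsInf : sInf {m : ℕ | BreaksDown est X y m} = 1 :=
    le_antisymm (Nat.sInf_le h) <| Nat.one_le_iff_ne_zero.mpr fun h0 =>
      not_breaksDown_zero est X y (h0 ▸ hmem)
  rw [breakdownPoint, hsInf, Nat.cast_one]

end Breakdown

section LADLasso

variable {n p : ℕ} {lam : ℝ}

theorem abs_le_euclNorm (β : Fin p → ℝ) (j : Fin p) : |β j| ≤ euclNorm β := by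
  rw [← Real.sqrt_sq_eq_abs]
  exact Real.sqrt_le_sqrt
    (Finset.single_le_sum (fun k _ => sq_nonneg (β k)) (Finset.mem_univ j))

theorem abs_residual_le_QLADLasso (hlam : 0 ≤ lam) (X : Fin n → Fin p → ℝ) (y : Fin n → ℝ)
    (β : Fin p → ℝ) (i : Fin n) :
    |y i - ∑ j, X i j * β j| ≤ QLADLasso lam X y β := by
  have hpen : 0 ≤ (n : ℝ) * lam * l1norm β :=
    mul_nonneg (by positivity) (Finset.sum_nonneg fun j _ => abs_nonneg (β j))
  have hres := Finset.single_le_sum (f := fun k => |y k - ∑ j, X k j * β j|)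
    (fun k _ => abs_nonneg _) (Finset.mem_univ i)
  rw [QLADLasso]
  linarith

theorem QLADLasso_single (lam : ℝ) (X : Fin n → Fin p → ℝ) (y : Fin n → ℝ) (j : Fin p)
    (t : ℝ) :
    QLADLasso lam X y (Pi.single j t) = ∑ i, |y i - X i j * t| + n * lam * |t| := by
  simp only [QLADLasso, l1norm, Pi.single_apply, mul_ite, mul_zero, abs_ite, abs_zero,
    Finset.sum_ite_eq', Finset.mem_univ, if_true]

theorem abs_mul_abs_sub_le_of_minimizer_outlier (hlam : 0 ≤ lam) (X : Fin n → Fin p → ℝ)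
    (y : Fin n → ℝ) (i : Fin n) (j : Fin p) (c t : ℝ) (β : Fin p → ℝ)
    (hβ : ∀ β', QLADLasso lam (Function.update X i (Pi.single j c))
      (Function.update y i (c * t)) β ≤
      QLADLasso lam (Function.update X i (Pi.single j c)) (Function.update y i (c * t)) β') :
    |c| * |t - β j| ≤ ∑ k, (|y k| + |X k j| * |t|) + n * lam * |t| := by
  set X' := Function.update X i (Pi.single j c)
  set y' := Function.update y i (c * t)
  have houtlier : |y' i - ∑ j', X' i j' * β j'| = |c| * |t - β j| := by
    simp only [y', X', Function.update_self, Pi.single_apply, ite_mul, zero_mul,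
      Finset.sum_ite_eq', Finset.mem_univ, if_true, ← mul_sub, abs_mul]
  have hterm : ∀ k, |y' k - X' k j * t| ≤ |y k| + |X k j| * |t| := by
    intro k
    rcases eq_or_ne k i with rfl | hk
    · simp only [y', X', Function.update_self, Pi.single_eq_same, sub_self, abs_zero]
      positivity
    · simp only [y', X', Function.update_of_ne hk]
      exact (abs_sub _ _).trans_eq (by rw [abs_mul])
  calc |c| * |t - β j|
      = |y' i - ∑ j', X' i j' * β j'| := houtlier.symm
    _ ≤ QLADLasso lam X' y' β := abs_residual_le_QLADLasso hlam X' y' β i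
    _ ≤ QLADLasso lam X' y' (Pi.single j t) := hβ _
    _ ≤ ∑ k, (|y k| + |X k j| * |t|) + n * lam * |t| := by
      rw [QLADLasso_single]
      gcongr with k
      exact hterm k

theorem exists_corrupt_one_forall_minimizer_lt_euclNorm (hn : 1 ≤ n) (hp : 1 ≤ p)
    (hlam : 0 ≤ lam) (X : Fin n → Fin p → ℝ) (y : Fin n → ℝ) (M : ℝ) :
    ∃ X' y', Corrupt 1 X X' y y' ∧
      ∀ β : Fin p → ℝ, (∀ β' : Fin p → ℝ, QLADLasso lam X' y' β ≤ QLADLasso lam X' y' β') →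
        M < euclNorm β := by
  let i : Fin n := ⟨0, hn⟩
  let j : Fin p := ⟨0, hp⟩
  set t : ℝ := 2 * |M| + 1
  have htpos : 0 < t := by positivity
  set K : ℝ := ∑ k, (|y k| + |X k j| * |t|) + n * lam * |t|
  have hK : 0 ≤ K := by positivity
  set c : ℝ := 2 * (K + 1) / t
  have hcpos : 0 < c := by positivity
  refine ⟨_, _, corrupt_one_update X y i (Pi.single j c) (c * t), fun β hβ => ?_⟩
  have hclose := abs_mul_abs_sub_le_of_minimizer_outlier hlam X y i j c t β hβ
  rw [abs_of_pos hcpos] at hclose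
  -- `c` is chosen so that `K / c < t / 2`
  have hct : c * t = 2 * (K + 1) := div_mul_cancel₀ _ htpos.ne'
  have hdist : 2 * |t - β j| < t := by
    by_contra! hge
    nlinarith [mul_le_mul_of_nonneg_left hge hcpos.le]
  have hM : M < β j := by
    linarith [le_abs_self (t - β j), le_abs_self M]
  exact hM.trans_le ((le_abs_self _).trans (abs_le_euclNorm β j))

end LADLasso

/-- The LAD-lasso estimator with penalty parameter `λ > 0`, i.e. any estimator that, for
every sample, minimizes the LAD-lasso objective, has replacement finite-sample breakdown
point `1/n` at every sample `Z = (X, y)`; in particular, replacing a single observation by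
suitably chosen values can make the Euclidean norm of every LAD-lasso minimizer arbitrarily
large. -/
theorem breakdown_point_LADlasso
    {n p : ℕ} (hn : 1 ≤ n) (hp : 1 ≤ p)
    (lam : ℝ) (hlam : 0 < lam)
    (est : (Fin n → Fin p → ℝ) → (Fin n → ℝ) → Fin p → ℝ)
    (hest : ∀ (X : Fin n → Fin p → ℝ) (y : Fin n → ℝ) (β : Fin p → ℝ),
      QLADLasso lam X y (est X y) ≤ QLADLasso lam X y β)
    (X : Fin n → Fin p → ℝ) (y : Fin n → ℝ) :
    breakdownPoint est X y = 1 / n ∧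
    ∀ M : ℝ, ∃ X' y', Corrupt 1 X X' y y' ∧
      ∀ β : Fin p → ℝ, (∀ β' : Fin p → ℝ, QLADLasso lam X' y' β ≤ QLADLasso lam X' y' β') →
        M < euclNorm β := by
  have hunbounded := exists_corrupt_one_forall_minimizer_lt_euclNorm hn hp hlam.le X y
  refine ⟨breakdownPoint_eq_of_breaksDown_one fun M => ?_, hunbounded⟩
  obtain ⟨X', y', hcorrupt, hlarge⟩ := hunbounded M
  exact ⟨X', y', hcorrupt, hlarge _ (hest X' y')⟩
end

section
/- Let ρ: ℝ → ℝ be convex, symmetric, with ρ(0) = 0 and ρ(x) > 0 for x ≠ 0, let λ > 0 and 1 ≤ h ≤ n. Let Z̃ = (X̃, ỹ) be a sample of n observations and suppose at least h of the values ỹ_i satisfy |ỹ_i| ≤ M_y for some constant M_y ≥ 0. Then every minimizer β̂ of Q_{Z̃}(β) = Σ_{i=1}^{h} (ρ(ỹ − X̃β))_{i:n} + h λ Σ_{j=1}^{p} |β_j| satisfies λ ‖β̂‖₁ ≤ ρ(M_y); in particular ‖β̂‖₂ ≤ ‖β̂‖₁ ≤ ρ(M_y)/λ. -/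
open Finset

/-- The trimmed penalized objective function
`Q_Z̃(β) = Σ_{i=1}^{h} (ρ(ỹ − X̃β))_{i:n} + h λ Σ_j |β_j|` with loss `ρ`. -/
noncomputable def QGen {n p : ℕ} (ρ : ℝ → ℝ) (lam : ℝ) (h : ℕ)
    (X : Fin n → Fin p → ℝ) (y : Fin n → ℝ) (β : Fin p → ℝ) : ℝ :=
  trimmedSum h (fun i => ρ (y i - ∑ j, X i j * β j)) + (h : ℝ) * lam * l1norm β

/-!
Compare the minimizer with `β = 0`. An even convex function vanishing at `0` is nonnegative and
nondecreasing in `|x|`, so the trimmed loss is nonnegative, giving `Q(β) ≥ h λ ‖β‖₁`, and at `β = 0`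
the `h` smallest losses are each at most `ρ(M_y)`, giving `Q(0) ≤ h ρ(M_y)`.
-/

section EvenConvex

variable {ρ : ℝ → ℝ}

lemma ConvexOn.apply_zero_le_of_even (hconv : ConvexOn ℝ Set.univ ρ) (heven : ρ.Even) (x : ℝ) :
    ρ 0 ≤ ρ x := by
  have hmid := hconv.2 (Set.mem_univ x) (Set.mem_univ (-x)) (by norm_num : (0 : ℝ) ≤ 1 / 2)
    (by norm_num : (0 : ℝ) ≤ 1 / 2) (by norm_num)
  simp only [smul_eq_mul, heven x] at hmid
  calc ρ 0 = ρ (1 / 2 * x + 1 / 2 * -x) := by ring_nf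
    _ ≤ 1 / 2 * ρ x + 1 / 2 * ρ x := hmid
    _ = ρ x := by ring

lemma ConvexOn.monotoneOn_of_even (hconv : ConvexOn ℝ Set.univ ρ) (heven : ρ.Even) :
    MonotoneOn ρ (Set.Ici 0) := by
  intro a ha b _ hab
  rcases (Set.mem_Ici.1 ha).eq_or_lt with rfl | ha
  · exact hconv.apply_zero_le_of_even heven b
  · exact hconv.le_right_of_left_le'' (Set.mem_univ _) (Set.mem_univ _) (neg_lt_self ha) hab
      (heven a).le

lemma ConvexOn.le_of_abs_le_of_even (hconv : ConvexOn ℝ Set.univ ρ) (heven : ρ.Even)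
    {x c : ℝ} (hxc : |x| ≤ c) : ρ x ≤ ρ c := by
  have habs : ρ |x| = ρ x := by
    rcases abs_choice x with hx | hx <;> rw [hx]
    exact heven x
  rw [← habs]
  exact hconv.monotoneOn_of_even heven (abs_nonneg x) ((abs_nonneg x).trans hxc) hxc

end EvenConvex

section OrderStatistics

variable {n : ℕ} {r : Fin n → ℝ} {c : ℝ}

lemma orderStat_le_of_lt_card_filter_le {i : Fin n} (hi : (i : ℕ) < #{k | r k ≤ c}) :
    orderStat r i ≤ c := by
  -- More than `i` entries are `≤ c`, so one of them sits at a sorted position `≥ i`.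
  set σ := Tuple.sort r
  have hcard : #{k | r (σ k) ≤ c} = #{k | r k ≤ c} := card_equiv σ (by simp)
  obtain ⟨k, hk, hki⟩ := exists_mem_notMem_of_card_lt_card
    (s := {k : Fin n | (k : ℕ) < i}) (t := {k | r (σ k) ≤ c})
    (by rw [hcard, Fin.card_filter_val_lt]; omega)
  simp only [mem_filter, mem_univ, true_and, not_lt] at hk hki
  exact (Tuple.monotone_sort r (Fin.le_def.2 hki)).trans hk

lemma trimmedSum_nonneg {h : ℕ} (hr : 0 ≤ r) : 0 ≤ trimmedSum h r :=
  sum_nonneg fun _ _ => hr _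

lemma trimmedSum_le_mul_of_le_card_filter_le {h : ℕ} (hc : 0 ≤ c) (hh : h ≤ #{k | r k ≤ c}) :
    trimmedSum h r ≤ h * c :=
  calc trimmedSum h r ≤ ∑ _i ∈ univ.filter (fun i : Fin n => (i : ℕ) < h), c :=
        sum_le_sum fun i hi => orderStat_le_of_lt_card_filter_le ((mem_filter.1 hi).2.trans_le hh)
    _ = (min n h : ℕ) * c := by rw [sum_const, Fin.card_filter_val_lt, nsmul_eq_mul]
    _ ≤ h * c := by gcongr; exact min_le_right n h

end OrderStatistics

lemma euclNorm_le_l1norm {p : ℕ} (β : Fin p → ℝ) : euclNorm β ≤ l1norm β := by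
  have hsq : ∑ j, β j ^ 2 ≤ (∑ j, |β j|) ^ 2 :=
    calc ∑ j, β j ^ 2 = ∑ j, |β j| ^ 2 := by simp only [sq_abs]
      _ ≤ (∑ j, |β j|) ^ 2 := sum_sq_le_sq_sum_of_nonneg fun j _ => abs_nonneg (β j)
  exact Real.sqrt_le_left (sum_nonneg fun j _ => abs_nonneg (β j)) |>.mpr hsq

section Objective

variable {n p h : ℕ} {ρ : ℝ → ℝ} {lam : ℝ} {X : Fin n → Fin p → ℝ} {y : Fin n → ℝ}

lemma mul_l1norm_le_QGen (hρ : 0 ≤ ρ) (β : Fin p → ℝ) :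
    h * lam * l1norm β ≤ QGen ρ lam h X y β :=
  le_add_of_nonneg_left (trimmedSum_nonneg fun _ => hρ _)

lemma QGen_zero_le (hconv : ConvexOn ℝ Set.univ ρ) (heven : ρ.Even) (hρ : 0 ≤ ρ) {My : ℝ}
    (hmany : h ≤ #{i | |y i| ≤ My}) : QGen ρ lam h X y 0 ≤ h * ρ My := by
  have hQ0 : QGen ρ lam h X y 0 = trimmedSum h (fun i => ρ (y i)) := by simp [QGen, l1norm]
  rw [hQ0]
  refine trimmedSum_le_mul_of_le_card_filter_le (hρ My) (hmany.trans (card_le_card ?_))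
  intro i hi
  simp only [mem_filter, mem_univ, true_and] at hi ⊢
  exact hconv.le_of_abs_le_of_even heven hi

end Objective

theorem trimmed_penalized_minimizer_bound_general
    {n p h : ℕ} (hh1 : 1 ≤ h)
    (ρ : ℝ → ℝ) (hconv : ConvexOn ℝ Set.univ ρ) (hsym : ∀ x : ℝ, ρ (-x) = ρ x)
    (hzero : ρ 0 = 0)
    (lam : ℝ) (hlam : 0 < lam)
    (X : Fin n → Fin p → ℝ) (y : Fin n → ℝ)
    (My : ℝ)
    (hmany : h ≤ (Finset.univ.filter (fun i : Fin n => |y i| ≤ My)).card) :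
    ∀ βhat : Fin p → ℝ,
      (∀ β : Fin p → ℝ, QGen ρ lam h X y βhat ≤ QGen ρ lam h X y β) →
      lam * l1norm βhat ≤ ρ My ∧ euclNorm βhat ≤ l1norm βhat ∧
        l1norm βhat ≤ ρ My / lam := by
  intro βhat hmin
  have hρ : ∀ x, 0 ≤ ρ x := fun x => hzero.symm.trans_le (hconv.apply_zero_le_of_even hsym x)
  have hQ : (h : ℝ) * (lam * l1norm βhat) ≤ h * ρ My :=
    calc (h : ℝ) * (lam * l1norm βhat) = h * lam * l1norm βhat := by ring
      _ ≤ QGen ρ lam h X y βhat := mul_l1norm_le_QGen hρ βhat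
      _ ≤ QGen ρ lam h X y 0 := hmin 0
      _ ≤ h * ρ My := QGen_zero_le hconv hsym hρ hmany
  have hbound : lam * l1norm βhat ≤ ρ My := le_of_mul_le_mul_left hQ (by exact_mod_cast hh1)
  exact ⟨hbound, euclNorm_le_l1norm βhat, (le_div_iff₀' hlam).2 hbound⟩

/-- If at least `h` of the responses `ỹᵢ` of a sample `Z̃ = (X̃, ỹ)` satisfy `|ỹᵢ| ≤ M_y`,
then every minimizer `β̂` of the trimmed penalized objective with convex symmetric loss `ρ`
(`ρ(0) = 0`, `ρ(x) > 0` for `x ≠ 0`), penalty `λ > 0` and subset size `1 ≤ h ≤ n` satisfies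
`λ ‖β̂‖₁ ≤ ρ(M_y)`; in particular `‖β̂‖₂ ≤ ‖β̂‖₁ ≤ ρ(M_y)/λ`. -/
theorem trimmed_penalized_minimizer_bound
    {n p h : ℕ} (hh1 : 1 ≤ h) (hhn : h ≤ n)
    (ρ : ℝ → ℝ) (hconv : ConvexOn ℝ Set.univ ρ) (hsym : ∀ x : ℝ, ρ (-x) = ρ x)
    (hzero : ρ 0 = 0) (hpos : ∀ x : ℝ, x ≠ 0 → 0 < ρ x)
    (lam : ℝ) (hlam : 0 < lam)
    (X : Fin n → Fin p → ℝ) (y : Fin n → ℝ)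
    (My : ℝ) (hMy : 0 ≤ My)
    (hmany : h ≤ (Finset.univ.filter (fun i : Fin n => |y i| ≤ My)).card) :
    ∀ βhat : Fin p → ℝ,
      (∀ β : Fin p → ℝ, QGen ρ lam h X y βhat ≤ QGen ρ lam h X y β) →
      lam * l1norm βhat ≤ ρ My ∧ euclNorm βhat ≤ l1norm βhat ∧
        l1norm βhat ≤ ρ My / lam :=
  trimmed_penalized_minimizer_bound_general hh1 ρ hconv hsym hzero lam hlam X y My hmany
end
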